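/- Let G = (V, E) be a finite simple graph and let 2 ≤ k < |V|. Define a metric δ on V by δ(u, v) = 1 if uv ∈ E, δ(u, v) = 2 if u ≠ v and uv ∉ E, and δ(u, u) = 0. Then G has an independent dominating set of cardinality k if and only if there exists a set P ⊆ V with |P| = k whose gap ratio in the metric space (V, δ) equals 1 (equivalently, R_P = r_P = 1). -/

import Mathlib

open Classical in
/-- The metric on the vertex set of `G` giving distance `1` to adjacent pairs and
`2` to distinct non-adjacent pairs. -/
noncomputable def dlt {V : Type*} (G : SimpleGraph V) (u v : V) : ℝ :=
  if u = v then 0 else if G.Adj u v then 1 else 2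

/-- Minimum gap of `P` with respect to a distance function `δ`. -/
noncomputable def minGapD {V : Type*} (δ : V → V → ℝ) (P : Set V) : ℝ :=
  sInf {d : ℝ | ∃ p ∈ P, ∃ q ∈ P, p ≠ q ∧ d = δ p q} / 2

/-- Maximum gap of `P` over the space `X` with respect to a distance function `δ`. -/
noncomputable def maxGapD {V : Type*} (δ : V → V → ℝ) (X P : Set V) : ℝ :=
  sSup ((fun x => sInf {d : ℝ | ∃ p ∈ P, d = δ x p}) '' X)

/-- `D` is an independent dominating set of `G`. -/
def IsIndepDominating {V : Type*} (G : SimpleGraph V) (D : Set V) : Prop :=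
  (∀ u ∈ D, ∀ v ∈ D, u ≠ v → ¬ G.Adj u v) ∧ (∀ v : V, v ∈ D ∨ ∃ u ∈ D, G.Adj v u)

/-!
In the metric `dlt G` every distance between distinct vertices is `1` or `2`. Hence the minimum
gap of a set with at least two points is `1` exactly when no two of its points are adjacent,
and, for a nonempty proper subset, the maximum gap is `1` exactly when every vertex outside it
has a neighbour in it.
-/

open Set

section

variable {V : Type*} (G : SimpleGraph V) {P : Set V} {u v x : V}

lemma dlt_self (u : V) : dlt G u u = 0 := by
  simp [dlt]

lemma dlt_of_adj (h : G.Adj u v) : dlt G u v = 1 := by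
  simp [dlt, h.ne, h]

lemma dlt_of_not_adj (hne : u ≠ v) (h : ¬ G.Adj u v) : dlt G u v = 2 := by
  simp [dlt, hne, h]

lemma one_le_dlt (hne : u ≠ v) : 1 ≤ dlt G u v := by
  rw [dlt, if_neg hne]; split_ifs <;> norm_num

lemma dlt_nonneg : 0 ≤ dlt G u v := by
  unfold dlt; split_ifs <;> norm_num

lemma dlt_le_two : dlt G u v ≤ 2 := by
  unfold dlt; split_ifs <;> norm_num

/-- `min_{p ∈ P} δ(x, p)`; the maximum gap `R_P` is its supremum over the space. -/
noncomputable def infDistD (δ : V → V → ℝ) (P : Set V) (x : V) : ℝ :=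
  sInf {d : ℝ | ∃ p ∈ P, d = δ x p}

lemma maxGapD_eq_sSup_image (δ : V → V → ℝ) (X P : Set V) :
    maxGapD δ X P = sSup (infDistD δ P '' X) :=
  rfl

lemma bddBelow_dlt_dists : BddBelow {d : ℝ | ∃ p ∈ P, d = dlt G x p} :=
  ⟨0, by rintro _ ⟨p, -, rfl⟩; exact dlt_nonneg G⟩

lemma infDistD_dlt_of_mem (hx : x ∈ P) : infDistD (dlt G) P x = 0 :=
  IsLeast.csInf_eq ⟨⟨x, hx, (dlt_self G x).symm⟩, by rintro _ ⟨p, -, rfl⟩; exact dlt_nonneg G⟩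

lemma one_le_infDistD_dlt (hP : P.Nonempty) (hx : x ∉ P) : 1 ≤ infDistD (dlt G) P x := by
  obtain ⟨p, hp⟩ := hP
  refine le_csInf ⟨_, p, hp, rfl⟩ ?_
  rintro _ ⟨q, hq, rfl⟩
  exact one_le_dlt G (ne_of_mem_of_not_mem hq hx).symm

lemma infDistD_dlt_of_adj (hx : x ∉ P) (hu : u ∈ P) (h : G.Adj x u) :
    infDistD (dlt G) P x = 1 :=
  le_antisymm (csInf_le (bddBelow_dlt_dists G) ⟨u, hu, (dlt_of_adj G h).symm⟩)
    (one_le_infDistD_dlt G ⟨u, hu⟩ hx)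

lemma infDistD_dlt_of_forall_not_adj (hP : P.Nonempty) (hx : x ∉ P)
    (h : ∀ u ∈ P, ¬ G.Adj x u) : infDistD (dlt G) P x = 2 := by
  have hdist : ∀ p ∈ P, dlt G x p = 2 := fun p hp =>
    dlt_of_not_adj G (ne_of_mem_of_not_mem hp hx).symm (h p hp)
  obtain ⟨p, hp⟩ := hP
  refine IsLeast.csInf_eq ⟨⟨p, hp, (hdist p hp).symm⟩, ?_⟩
  rintro _ ⟨q, hq, rfl⟩
  exact (hdist q hq).ge

lemma infDistD_dlt_le_two : infDistD (dlt G) P x ≤ 2 := by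
  rcases P.eq_empty_or_nonempty with rfl | ⟨p, hp⟩
  · simp [infDistD]
  · exact (csInf_le (bddBelow_dlt_dists G) ⟨p, hp, rfl⟩).trans (dlt_le_two G)

lemma maxGapD_dlt_eq_one_iff (hP : P.Nonempty) (hPu : P ≠ univ) :
    maxGapD (dlt G) univ P = 1 ↔ ∀ v, v ∈ P ∨ ∃ u ∈ P, G.Adj v u := by
  rw [maxGapD_eq_sSup_image]
  constructor
  · intro hmax v
    by_contra! hv
    have hbdd : BddAbove (infDistD (dlt G) P '' univ) :=
      ⟨2, by rintro _ ⟨y, -, rfl⟩; exact infDistD_dlt_le_two G⟩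
    have hle := le_csSup hbdd (mem_image_of_mem (infDistD (dlt G) P) (mem_univ v))
    rw [infDistD_dlt_of_forall_not_adj G hP hv.1 hv.2, hmax] at hle
    norm_num at hle
  · intro hdom
    have hle : ∀ y, infDistD (dlt G) P y ≤ 1 := fun y => by
      rcases hdom y with hy | ⟨u, hu, hadj⟩
      · rw [infDistD_dlt_of_mem G hy]; norm_num
      · by_cases hy : y ∈ P
        · rw [infDistD_dlt_of_mem G hy]; norm_num
        · rw [infDistD_dlt_of_adj G hy hu hadj]
    obtain ⟨x, hx⟩ := (ne_univ_iff_exists_notMem P).mp hPu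
    have hx1 : infDistD (dlt G) P x = 1 := by
      obtain ⟨u, hu, hadj⟩ := (hdom x).resolve_left hx
      exact infDistD_dlt_of_adj G hx hu hadj
    exact IsGreatest.csSup_eq ⟨⟨x, mem_univ x, hx1⟩, by rintro _ ⟨y, -, rfl⟩; exact hle y⟩

lemma minGapD_dlt_eq_one_iff (hP : P.Nontrivial) :
    minGapD (dlt G) P = 1 ↔ ∀ u ∈ P, ∀ v ∈ P, u ≠ v → ¬ G.Adj u v := by
  set S := {d : ℝ | ∃ p ∈ P, ∃ q ∈ P, p ≠ q ∧ d = dlt G p q}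
  have hS : minGapD (dlt G) P = sInf S / 2 := rfl
  have hbdd : BddBelow S := ⟨0, by rintro _ ⟨p, -, q, -, -, rfl⟩; exact dlt_nonneg G⟩
  rw [hS]
  constructor
  · intro hmin u hu v hv hne hadj
    have hle := csInf_le hbdd ⟨u, hu, v, hv, hne, (dlt_of_adj G hadj).symm⟩
    linarith
  · intro hind
    have hdist : ∀ p ∈ P, ∀ q ∈ P, p ≠ q → dlt G p q = 2 := fun p hp q hq hne =>
      dlt_of_not_adj G hne (hind p hp q hq hne)
    obtain ⟨p, hp, q, hq, hne⟩ := hP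
    have hinf : sInf S = 2 := IsLeast.csInf_eq
      ⟨⟨p, hp, q, hq, hne, (hdist p hp q hq hne).symm⟩,
        by rintro _ ⟨p, hp, q, hq, hne, rfl⟩; exact (hdist p hp q hq hne).ge⟩
    rw [hinf]; norm_num

lemma isIndepDominating_iff_gaps_eq_one (hP : P.Nontrivial) (hPu : P ≠ univ) :
    IsIndepDominating G P ↔ maxGapD (dlt G) univ P = 1 ∧ minGapD (dlt G) P = 1 := by
  rw [IsIndepDominating, maxGapD_dlt_eq_one_iff G hP.nonempty hPu,
    minGapD_dlt_eq_one_iff G hP, and_comm]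

end

/-- `G` has an independent dominating set of cardinality `k` iff there is a
`k`-point set `P` of vertices with gap ratio `1` (i.e. `R_P = r_P = 1`) in the
metric assigning `1` to edges and `2` to non-edges. -/
theorem stmt5 {V : Type*} [Fintype V] (G : SimpleGraph V) (k : ℕ)
    (hk2 : 2 ≤ k) (hkV : k < Fintype.card V) :
    (∃ D : Set V, D.ncard = k ∧ IsIndepDominating G D) ↔
    (∃ P : Set V, P.ncard = k ∧
      maxGapD (dlt G) Set.univ P = 1 ∧ minGapD (dlt G) P = 1) := by
  refine exists_congr fun P => and_congr_right fun hcard => ?_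
  have hP : P.Nontrivial := one_lt_ncard_iff_nontrivial.mp (by omega)
  have hPu : P ≠ univ := by
    rintro rfl
    rw [ncard_univ, Nat.card_eq_fintype_card] at hcard
    omega
  exact isIndepDominating_iff_gaps_eq_one G hP hPu
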